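/- As formal power series in x over ℚ, the identity (1-x^2)[1 - 2√2 / (3√2 - √(1 + x^2 + √((1-x^2)^2 - 16x^2·x^2/(1-x^2)^2)))] = (1-x^2)[1 - 4/(6 - √((1-x)^2 - 4x·x^2/(1-x^2)) - √((1+x)^2 + 4x·x^2/(1-x^2)))] holds, i.e., formulas (12) and (13) of the paper agree at y = x. -/

import Mathlib

/-!
Write `u = 4xy²/(1-y²)`, `a = (1-x)² - u` and `b = (1+x)² + u`. Then `(a + b)/2 = 1 + x²` and
`ab = (1-x²)² - 16x²y²/(1-y²)²`, so squaring `√a + √b` turns the denominator of (13) into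
`6 - √2·√(1 + x² + √(ab))`, which is `√2` times the denominator of (12).
-/

open Real

theorem Real.sqrt_add_sqrt_eq {a b : ℝ} (ha : 0 ≤ a) (hb : 0 ≤ b) :
    √a + √b = √2 * √((a + b) / 2 + √(a * b)) := by
  rw [← sqrt_mul zero_le_two, sqrt_mul ha, eq_comm,
    sqrt_eq_iff_mul_self_eq (by positivity) (by positivity)]
  ring_nf
  rw [sq_sqrt ha, sq_sqrt hb]
  ring

theorem four_div_six_sub_sqrt_two_mul (t : ℝ) :
    4 / (6 - √2 * t) = 2 * √2 / (3 * √2 - t) := by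
  have h2 : √2 * √2 = 2 := mul_self_sqrt zero_le_two
  have h6 : 6 - √2 * t = √2 * (3 * √2 - t) := by linear_combination (-3) * h2
  have h4 : 4 / √2 = 2 * √2 := by
    rw [div_eq_iff (by positivity)]
    linear_combination (-2) * h2
  rw [h6, ← div_div, h4]

theorem perimeter_radicands_mul (x y : ℝ) (hy : y ^ 2 ≠ 1) :
    ((1 - x) ^ 2 - 4 * x * y ^ 2 / (1 - y ^ 2)) * ((1 + x) ^ 2 + 4 * x * y ^ 2 / (1 - y ^ 2)) =
      (1 - x ^ 2) ^ 2 - 16 * x ^ 2 * y ^ 2 / (1 - y ^ 2) ^ 2 := by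
  have : 1 - y ^ 2 ≠ 0 := sub_ne_zero.2 hy.symm
  field_simp
  ring

theorem sqrt_add_sqrt_perimeter_radicands (x y : ℝ) (hy : y ^ 2 ≠ 1)
    (ha : 0 ≤ (1 - x) ^ 2 - 4 * x * y ^ 2 / (1 - y ^ 2))
    (hb : 0 ≤ (1 + x) ^ 2 + 4 * x * y ^ 2 / (1 - y ^ 2)) :
    √((1 - x) ^ 2 - 4 * x * y ^ 2 / (1 - y ^ 2)) + √((1 + x) ^ 2 + 4 * x * y ^ 2 / (1 - y ^ 2)) =
      √2 * √(1 + x ^ 2 + √((1 - x ^ 2) ^ 2 - 16 * x ^ 2 * y ^ 2 / (1 - y ^ 2) ^ 2)) := by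
  rw [sqrt_add_sqrt_eq ha hb, perimeter_radicands_mul x y hy]
  ring_nf

theorem formula12_eq_formula13 (x y : ℝ) (hy : y ^ 2 ≠ 1)
    (ha : 0 ≤ (1 - x) ^ 2 - 4 * x * y ^ 2 / (1 - y ^ 2))
    (hb : 0 ≤ (1 + x) ^ 2 + 4 * x * y ^ 2 / (1 - y ^ 2)) :
    (1 - y ^ 2) * (1 - 2 * √2 /
        (3 * √2 - √(1 + x ^ 2 + √((1 - x ^ 2) ^ 2 - 16 * x ^ 2 * y ^ 2 / (1 - y ^ 2) ^ 2)))) =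
      (1 - y ^ 2) * (1 - 4 /
        (6 - √((1 - x) ^ 2 - 4 * x * y ^ 2 / (1 - y ^ 2)) -
          √((1 + x) ^ 2 + 4 * x * y ^ 2 / (1 - y ^ 2)))) := by
  rw [sub_sub 6, sqrt_add_sqrt_perimeter_radicands x y hy ha hb, four_div_six_sub_sqrt_two_mul]

/-- Formulas (12) and (13) of the paper agree at `y = x`, interpreted as real
analytic functions for small `x > 0`. -/
theorem formulas_12_13_agree :
    ∃ ε > (0 : ℝ), ∀ x : ℝ, 0 < x → x < ε →
      (1 - x ^ 2) * (1 - 2 * Real.sqrt 2 /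
          (3 * Real.sqrt 2 - Real.sqrt (1 + x ^ 2 +
            Real.sqrt ((1 - x ^ 2) ^ 2 - 16 * x ^ 2 * x ^ 2 / (1 - x ^ 2) ^ 2)))) =
        (1 - x ^ 2) * (1 - 4 /
          (6 - Real.sqrt ((1 - x) ^ 2 - 4 * x * x ^ 2 / (1 - x ^ 2)) -
            Real.sqrt ((1 + x) ^ 2 + 4 * x * x ^ 2 / (1 - x ^ 2)))) := by
  refine ⟨1 / 4, by norm_num, fun x hx0 hx => ?_⟩
  have hx2 : x ^ 2 < 1 := by nlinarith
  have hu : 0 ≤ 4 * x * x ^ 2 / (1 - x ^ 2) := div_nonneg (by positivity) (by linarith)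
  refine formula12_eq_formula13 x x hx2.ne ?_ (by positivity)
  rw [sub_nonneg, div_le_iff₀ (by linarith)]
  nlinarith
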